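/- Let $G$ be a finite group, $x \in G$, and $L \trianglelefteq M \trianglelefteq G$ with $x \in M$. Then $|(xL)^{M/L}|$ divides $|x^G|$. -/

import Mathlib

/-!
Conjugacy classes have the size of the index of the centralizer. The centralizer `C_M(x)` maps
into the centralizer of `xL` in `M/L`, so `|(xL)^{M/L}|` divides `[M : C_M(x)]`; and since `M` is
normal, `[M : C_M(x)] = [M C_G(x) : C_G(x)]`, which divides `[G : C_G(x)] = |x^G|`.
-/

open Subgroup

theorem natCard_setOf_isConj_eq_index_centralizer {G : Type*} [Group G] (a : G) :
    Nat.card {y : G | IsConj a y} = (centralizer {a}).index := by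
  have hclass : {y : G | IsConj a y} = MulAction.orbit (ConjAct G) a := by
    ext y
    exact isConj_comm.trans ConjAct.mem_orbit_conjAct.symm
  rw [hclass, Nat.card_coe_set_eq, ← MulAction.index_stabilizer,
    centralizer_eq_comap_stabilizer]
  exact (index_comap_of_surjective _ ConjAct.toConjAct.surjective).symm

namespace Subgroup

variable {G : Type*} [Group G]

theorem relIndex_sup_of_normal_right (H K : Subgroup G) [K.Normal] :
    H.relIndex (H ⊔ K) = H.relIndex K := by
  let ι := quotientSubgroupOfEmbeddingOfLE H (le_sup_right : K ≤ H ⊔ K)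
  have hsurj : Function.Surjective ι := by
    rintro ⟨g, hg⟩
    -- `H ⊔ K = K * H` because `K` is normal
    obtain ⟨k, hk, h, hh, rfl⟩ := mem_sup_of_normal_left.mp (sup_comm H K ▸ hg)
    refine ⟨QuotientGroup.mk ⟨k, hk⟩, QuotientGroup.eq.mpr ?_⟩
    simpa [mem_subgroupOf] using hh
  exact (Nat.card_congr (Equiv.ofBijective ι ⟨ι.injective, hsurj⟩)).symm

theorem relIndex_dvd_index_of_normal_right (H K : Subgroup G) [K.Normal] :
    H.relIndex K ∣ H.index :=
  relIndex_sup_of_normal_right H K ▸ relIndex_dvd_index_of_le le_sup_left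

theorem centralizer_eq_subgroupOf_centralizer_image (K : Subgroup G) (s : Set K) :
    centralizer s = (centralizer (Subtype.val '' s)).subgroupOf K := by
  ext k
  simp only [mem_centralizer_iff, mem_subgroupOf, Set.forall_mem_image, Subtype.ext_iff,
    coe_mul]

end Subgroup

theorem card_conjClass_subquotient_dvd_general {G : Type*} [Group G]
    (L M : Subgroup G) (hL : L.Normal) (hM : M.Normal)
    (x : G) (hx : x ∈ M) :
    haveI : (L.subgroupOf M).Normal := hL.subgroupOf M
    Nat.card {y : M ⧸ L.subgroupOf M | IsConj ((⟨x, hx⟩ : M) : M ⧸ L.subgroupOf M) y} ∣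
      Nat.card {y : G | IsConj x y} := by
  have : (L.subgroupOf M).Normal := hL.subgroupOf M
  let π := QuotientGroup.mk' (L.subgroupOf M)
  have hcent : centralizer {(⟨x, hx⟩ : M)} ≤ (centralizer {π ⟨x, hx⟩}).comap π := by
    simpa only [Set.image_singleton] using
      map_le_iff_le_comap.mp (map_centralizer_le_centralizer_image {⟨x, hx⟩} π)
  rw [natCard_setOf_isConj_eq_index_centralizer, natCard_setOf_isConj_eq_index_centralizer,
    ← index_comap_of_surjective _ (QuotientGroup.mk'_surjective _)]
  calc ((centralizer {π ⟨x, hx⟩}).comap π).index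
      ∣ (centralizer {(⟨x, hx⟩ : M)}).index := index_dvd_of_le hcent
    _ = (centralizer {x}).relIndex M := by
      rw [centralizer_eq_subgroupOf_centralizer_image, Set.image_singleton]; rfl
    _ ∣ (centralizer {x}).index := relIndex_dvd_index_of_normal_right _ M

theorem card_conjClass_subquotient_dvd {G : Type*} [Group G] [Finite G]
    (L M : Subgroup G) (hL : L.Normal) (hM : M.Normal) (hLM : L ≤ M)
    (x : G) (hx : x ∈ M) :
    haveI : (L.subgroupOf M).Normal := hL.subgroupOf M
    Nat.card {y : M ⧸ L.subgroupOf M | IsConj ((⟨x, hx⟩ : M) : M ⧸ L.subgroupOf M) y} ∣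
      Nat.card {y : G | IsConj x y} :=
  card_conjClass_subquotient_dvd_general L M hL hM x hx
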